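/- Let h : [0, Q̄] → ℝ be p-Lipschitz and nonincreasing, with 0 ≤ c ≤ p. Then F(Q) = inf_{u ∈ [0, min(r, Q + x)]} [c·min(K, r − u) + p·max(0, r − u − K) + h(min(Q + x − u, Q̄))] is p-Lipschitz on [0, Q̄]. -/

import Mathlib

/-!
Write `t = r - u` for the unmet demand. Since `min K t + max 0 (t - K) = t`, the running cost is
`c t + (p - c) (t - K)⁺`, which grows with slope between `0` and `p` in `t`. Hence the value function
is antitone (a larger store enlarges the set of admissible releases and, `h` being antitone,
lowers the continuation cost), and when the store drops from `Q₂` to `Q₁` a release `u` admissible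
at `Q₂` can be replaced by `min u (Q₁ + x)`: the release lost costs at most `p` per unit in running
cost, the storage lost costs at most `p` per unit through `h`, and together they do not exceed
`Q₂ - Q₁`.
-/

open Set

theorem csInf_image_le_csInf_image_add {α : Type*} {f g : α → ℝ} {s t : Set α} {δ : ℝ}
    (hs : BddBelow (f '' s)) (ht : t.Nonempty) (H : ∀ b ∈ t, ∃ a ∈ s, f a ≤ g b + δ) :
    sInf (f '' s) ≤ sInf (g '' t) + δ := by
  rw [← sub_le_iff_le_add]
  refine le_csInf (ht.image g) ?_
  rintro _ ⟨b, hb, rfl⟩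
  obtain ⟨a, ha, hab⟩ := H b hb
  linarith [csInf_le hs (mem_image_of_mem f ha)]

theorem AntitoneOn.lipschitzOnWith_of_le_add_mul {f : ℝ → ℝ} {s : Set ℝ} {K : ℝ} (hK : 0 ≤ K)
    (hf : AntitoneOn f s) (H : ∀ a ∈ s, ∀ b ∈ s, a ≤ b → f a ≤ f b + K * (b - a)) :
    LipschitzOnWith (Real.toNNReal K) f s := by
  refine LipschitzOnWith.of_le_add_mul' K fun a ha b hb => ?_
  rcases le_total a b with hab | hba
  · rw [Real.dist_eq, abs_of_nonpos (sub_nonpos.2 hab), neg_sub]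
    exact H a ha b hb hab
  · exact (hf hb ha hba).trans (le_add_of_nonneg_right (mul_nonneg hK dist_nonneg))

theorem min_sub_min_le_sub {α : Type*} [AddCommGroup α] [LinearOrder α] [IsOrderedAddMonoid α]
    {a b : α} (c : α) (hab : a ≤ b) : min b c - min a c ≤ b - a :=
  calc min b c - min a c ≤ |min b c - min a c| := le_abs_self _
    _ ≤ max |b - a| |c - c| := abs_min_sub_min_le_max _ _ _ _
    _ = b - a := by simp [abs_of_nonneg (sub_nonneg.2 hab), hab]

theorem min_sub_mem_Icc {a u b : ℝ} (hb : 0 ≤ b) (hu : u ≤ a) : min (a - u) b ∈ Icc 0 b :=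
  ⟨le_min (sub_nonneg.2 hu) hb, min_le_right _ _⟩

/-- The cost of an unmet demand `t`: thermal generation of capacity `K` at price `c`,
the remainder at price `p`. -/
def shortfallCost (K c p t : ℝ) : ℝ := c * min K t + p * max 0 (t - K)

section shortfallCost

variable {K c p s t : ℝ}

theorem shortfallCost_eq : shortfallCost K c p t = c * t + (p - c) * max 0 (t - K) := by
  have hmax : max 0 (t - K) = max K t - K := by rw [← max_sub_sub_right, sub_self]
  rw [shortfallCost, hmax]
  linear_combination c * min_add_max K t

theorem shortfallCost_nonneg (hc : 0 ≤ c) (hcp : c ≤ p) (ht : 0 ≤ t) :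
    0 ≤ shortfallCost K c p t := by
  rw [shortfallCost_eq]
  exact add_nonneg (mul_nonneg hc ht) (mul_nonneg (sub_nonneg.2 hcp) (le_max_left _ _))

theorem shortfallCost_le_add (hcp : c ≤ p) (hst : s ≤ t) :
    shortfallCost K c p t ≤ shortfallCost K c p s + p * (t - s) := by
  rw [shortfallCost_eq, shortfallCost_eq]
  have hmax : max 0 (t - K) - max 0 (s - K) ≤ t - s :=
    calc max 0 (t - K) - max 0 (s - K) ≤ max (0 - 0) (t - K - (s - K)) :=
          max_sub_max_le_max _ _ _ _
      _ = t - s := by rw [sub_self, max_eq_right (by linarith)]; ring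
  nlinarith [mul_le_mul_of_nonneg_left hmax (sub_nonneg.2 hcp)]

end shortfallCost

section Reservoir

variable (Qbar x r K c p : ℝ) (h : ℝ → ℝ)

def stageCost (Q u : ℝ) : ℝ := shortfallCost K c p (r - u) + h (min (Q + x - u) Qbar)

noncomputable def valueFn (Q : ℝ) : ℝ := sInf (stageCost Qbar x r K c p h Q '' Icc 0 (min r (Q + x)))

variable {Qbar x r K c p h}

theorem stageCost_image_bddBelow (hc : 0 ≤ c) (hcp : c ≤ p) (hh : AntitoneOn h (Icc 0 Qbar))
    {Q : ℝ} (hQ : Q ∈ Icc 0 Qbar) :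
    BddBelow (stageCost Qbar x r K c p h Q '' Icc 0 (min r (Q + x))) := by
  have hQbar : 0 ≤ Qbar := hQ.1.trans hQ.2
  refine ⟨h Qbar, forall_mem_image.2 fun u hu => ?_⟩
  have hrun : 0 ≤ shortfallCost K c p (r - u) :=
    shortfallCost_nonneg hc hcp (sub_nonneg.2 (hu.2.trans (min_le_left _ _)))
  have hnext : h Qbar ≤ h (min (Q + x - u) Qbar) :=
    hh (min_sub_mem_Icc hQbar (hu.2.trans (min_le_right _ _))) (right_mem_Icc.2 hQbar)
      (min_le_right _ _)
  rw [stageCost]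
  linarith

theorem valueFn_antitoneOn (hx : 0 ≤ x) (hr : 0 ≤ r) (hc : 0 ≤ c) (hcp : c ≤ p)
    (hh : AntitoneOn h (Icc 0 Qbar)) : AntitoneOn (valueFn Qbar x r K c p h) (Icc 0 Qbar) := by
  intro Q₁ hQ₁ Q₂ hQ₂ h12
  have hQbar : 0 ≤ Qbar := hQ₁.1.trans hQ₁.2
  have hmono : ∀ u ∈ Icc 0 (min r (Q₁ + x)), ∃ v ∈ Icc 0 (min r (Q₂ + x)),
      stageCost Qbar x r K c p h Q₂ v ≤ stageCost Qbar x r K c p h Q₁ u + 0 := by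
    intro u hu
    have hu₁ : u ≤ Q₁ + x := hu.2.trans (min_le_right _ _)
    refine ⟨u, ⟨hu.1, hu.2.trans (min_le_min_left r (by linarith))⟩, ?_⟩
    rw [stageCost, stageCost, add_zero]
    exact add_le_add_right (hh (min_sub_mem_Icc hQbar hu₁)
      (min_sub_mem_Icc hQbar (by linarith)) (min_le_min_right _ (by linarith))) _
  simpa only [valueFn, add_zero] using csInf_image_le_csInf_image_add
    (stageCost_image_bddBelow hc hcp hh hQ₂) (nonempty_Icc.2 (le_min hr (by linarith [hQ₁.1])))
    hmono

theorem stageCost_le_add_of_le (hcp : c ≤ p) (hp : 0 ≤ p)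
    (hhL : LipschitzOnWith (Real.toNNReal p) h (Icc 0 Qbar)) {Q₁ Q₂ u : ℝ}
    (hQbar : 0 ≤ Qbar) (h12 : Q₁ ≤ Q₂) (hu : u ∈ Icc 0 (min r (Q₂ + x))) :
    stageCost Qbar x r K c p h Q₁ (min u (Q₁ + x)) ≤
      stageCost Qbar x r K c p h Q₂ u + p * (Q₂ - Q₁) := by
  set u' := min u (Q₁ + x)
  have hu₂ : u ≤ Q₂ + x := hu.2.trans (min_le_right _ _)
  have hlevel : Q₁ + x - u' ≤ Q₂ + x - u := by
    rcases min_cases u (Q₁ + x) with ⟨hu', _⟩ | ⟨hu', _⟩ <;> simp only [u', hu'] <;> linarith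
  have hrun := shortfallCost_le_add (K := K) hcp (show r - u ≤ r - u' by
    linarith [min_le_left u (Q₁ + x)])
  have hstore := min_sub_min_le_sub Qbar hlevel
  have hnext : h (min (Q₁ + x - u') Qbar) ≤
      h (min (Q₂ + x - u) Qbar) + p * (min (Q₂ + x - u) Qbar - min (Q₁ + x - u') Qbar) := by
    have := hhL.le_add_mul (min_sub_mem_Icc hQbar (min_le_right u (Q₁ + x)))
      (min_sub_mem_Icc hQbar hu₂)
    rwa [Real.coe_toNNReal p hp, Real.dist_eq, abs_of_nonpos
      (sub_nonpos.2 (min_le_min_right _ hlevel)), neg_sub] at this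
  rw [stageCost, stageCost]
  nlinarith [mul_le_mul_of_nonneg_left hstore hp]

theorem valueFn_le_add_of_le (hx : 0 ≤ x) (hr : 0 ≤ r) (hc : 0 ≤ c) (hcp : c ≤ p)
    (hhL : LipschitzOnWith (Real.toNNReal p) h (Icc 0 Qbar)) (hh : AntitoneOn h (Icc 0 Qbar))
    {Q₁ Q₂ : ℝ} (hQ₁ : Q₁ ∈ Icc 0 Qbar) (h12 : Q₁ ≤ Q₂) :
    valueFn Qbar x r K c p h Q₁ ≤ valueFn Qbar x r K c p h Q₂ + p * (Q₂ - Q₁) := by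
  have hQx : 0 ≤ Q₁ + x := add_nonneg hQ₁.1 hx
  refine csInf_image_le_csInf_image_add (stageCost_image_bddBelow hc hcp hh hQ₁)
    (nonempty_Icc.2 (le_min hr (by linarith))) fun u hu => ⟨min u (Q₁ + x), ?_, ?_⟩
  · exact ⟨le_min hu.1 hQx, min_le_min_right _ (hu.2.trans (min_le_left _ _))⟩
  · exact stageCost_le_add_of_le hcp (hc.trans hcp) hhL (hQ₁.1.trans hQ₁.2) h12 hu

end Reservoir

theorem stmt_10_general (Qbar x r K c p : ℝ) (hx : 0 ≤ x) (hr : 0 ≤ r)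
    (hc : 0 ≤ c) (hcp : c ≤ p)
    (h : ℝ → ℝ) (hhL : LipschitzOnWith (Real.toNNReal p) h (Set.Icc 0 Qbar))
    (hh : AntitoneOn h (Set.Icc 0 Qbar)) :
    LipschitzOnWith (Real.toNNReal p) (fun Q : ℝ =>
      sInf ((fun u : ℝ => c * min K (r - u) + p * max 0 (r - u - K) +
        h (min (Q + x - u) Qbar)) '' Set.Icc 0 (min r (Q + x)))) (Set.Icc 0 Qbar) :=
  (valueFn_antitoneOn (K := K) hx hr hc hcp hh).lipschitzOnWith_of_le_add_mul (hc.trans hcp)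
    fun _ hQ₁ _ _ h12 => valueFn_le_add_of_le hx hr hc hcp hhL hh hQ₁ h12

theorem stmt_10 (Qbar x r K c p : ℝ) (hQbar : 0 < Qbar) (hx : 0 ≤ x) (hr : 0 ≤ r)
    (hK : 0 ≤ K) (hc : 0 ≤ c) (hcp : c ≤ p)
    (h : ℝ → ℝ) (hhL : LipschitzOnWith (Real.toNNReal p) h (Set.Icc 0 Qbar))
    (hh : AntitoneOn h (Set.Icc 0 Qbar)) :
    LipschitzOnWith (Real.toNNReal p) (fun Q : ℝ =>
      sInf ((fun u : ℝ => c * min K (r - u) + p * max 0 (r - u - K) +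
        h (min (Q + x - u) Qbar)) '' Set.Icc 0 (min r (Q + x)))) (Set.Icc 0 Qbar) :=
  stmt_10_general Qbar x r K c p hx hr hc hcp h hhL hh
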